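/- arXiv:2508.14372 — 2 statements merged into one kernel-verified Lean document; each statement's English description precedes it below -/
import Mathlib

section
/- If G is a Dehn-Sommerville q-manifold, then its Barycentric refinement G_1 is a Dehn-Sommerville q-manifold. -/
/-!
The unit sphere of a simplex `x` is the join of the boundary of `x` with the link of `x`.
Boundaries of simplices are Dehn-Sommerville spheres and joins of Dehn-Sommerville spheres are again
such spheres (`1 - χ` is multiplicative under joins), so `A` is a Dehn-Sommerville `q`-manifold iff
the link of every simplex `x` is a Dehn-Sommerville `(q - |x|)`-sphere.

In the Barycentric refinement, the link of a chain `c` with smallest element `m` is the join of the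
refinement of the boundary of `m` with the link of `c \ {m}` in the refinement of the upper set
`{y ∈ A | m ⊂ y}`, which is a copy of the refinement of the link of `m` in `A`. The boundary and
the link of `m` are spheres strictly smaller than `A`; by induction, and since refinement preserves
the Euler characteristic, their refinements are spheres, hence so is every link in the refinement.
-/

open Finset

/-- A finite abstract simplicial complex: a finite set of nonempty finite sets
closed under taking nonempty subsets. -/
def IsComplex {α : Type*} (G : Finset (Finset α)) : Prop :=
  ∀ x ∈ G, x ≠ ∅ ∧ ∀ y ⊆ x, y ≠ ∅ → y ∈ G

/-- The star U(x) = {y ∈ G : x ⊆ y}. -/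
def starOf {α : Type*} [DecidableEq α] (G : Finset (Finset α)) (x : Finset α) :
    Finset (Finset α) :=
  G.filter fun y => x ⊆ y

/-- The closed ball B(x): all (nonempty) simplices contained in some member of U(x). -/
def ballOf {α : Type*} [DecidableEq α] (G : Finset (Finset α)) (x : Finset α) :
    Finset (Finset α) :=
  G.filter fun z => ∃ y ∈ G, x ⊆ y ∧ z ⊆ y

/-- The unit sphere S(x) = B(x) \ U(x). -/
def sphereOf {α : Type*} [DecidableEq α] (G : Finset (Finset α)) (x : Finset α) :
    Finset (Finset α) :=
  ballOf G x \ starOf G x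

/-- Maximal dimension of a complex; the empty complex has dimension -1. -/
def dimC {α : Type*} (G : Finset (Finset α)) : ℤ := ((G.sup Finset.card : ℕ) : ℤ) - 1

/-- Euler characteristic χ(A) = Σ_{x∈A} (−1)^{|x|−1}. -/
def chi {α : Type*} (A : Finset (Finset α)) : ℤ := ∑ x ∈ A, (-1 : ℤ) ^ (x.card - 1)

/-- The set of vertices of a complex (elements occurring in some simplex). -/
def vertexSet {α : Type*} [DecidableEq α] (G : Finset (Finset α)) : Finset α := G.sup id

/-- Dehn-Sommerville spheres, defined inductively: the empty complex is the
Dehn-Sommerville (−1)-sphere, and a complex of maximal dimension q ≥ 0 is a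
Dehn-Sommerville q-sphere if all unit spheres are Dehn-Sommerville (q−1)-spheres
and χ(G) = 1 + (−1)^q. -/
inductive IsDSSphere {α : Type*} [DecidableEq α] : ℤ → Finset (Finset α) → Prop
  | empty : IsDSSphere (-1) (∅ : Finset (Finset α))
  | step (q : ℕ) (G : Finset (Finset α)) (hC : IsComplex G) (hq : dimC G = q)
      (hS : ∀ x ∈ G, IsDSSphere ((q : ℤ) - 1) (sphereOf G x))
      (hχ : chi G = 1 + (-1) ^ q) : IsDSSphere q G

/-- A Dehn-Sommerville q-manifold: a complex of maximal dimension q all of whose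
unit spheres are Dehn-Sommerville (q−1)-spheres. -/
def IsDSManifold {α : Type*} [DecidableEq α] (q : ℤ) (G : Finset (Finset α)) : Prop :=
  IsComplex G ∧ dimC G = q ∧ ∀ x ∈ G, IsDSSphere (q - 1) (sphereOf G x)

/-- The Whitney complex of the comparability graph of a set W of simplices:
its simplices are the nonempty subsets of W that are pairwise comparable
under inclusion. -/
def chainComplex {α : Type*} [DecidableEq α] (W : Finset (Finset α)) :
    Finset (Finset (Finset α)) :=
  W.powerset.filter fun c => c ≠ ∅ ∧ ∀ x ∈ c, ∀ y ∈ c, x ⊆ y ∨ y ⊆ x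

/-- The level set G_g = {x ∈ G : g(x) = {0,…,k}}, where g is extended to
simplices by g(x) = {g(v) : v vertex of x}. -/
def levelSet {α : Type*} [DecidableEq α] (G : Finset (Finset α)) (k : ℕ)
    (g : α → Fin (k + 1)) : Finset (Finset α) :=
  G.filter fun x => x.image g = Finset.univ

section Complexes

variable {α : Type*}

theorem IsComplex.ne_empty {A : Finset (Finset α)} (hA : IsComplex A) {a : Finset α}
    (ha : a ∈ A) : a ≠ ∅ :=
  (hA a ha).1

theorem IsComplex.mem_of_subset {A : Finset (Finset α)} (hA : IsComplex A) {a b : Finset α}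
    (ha : a ∈ A) (hba : b ⊆ a) (hb : b ≠ ∅) : b ∈ A :=
  (hA a ha).2 b hba hb

theorem IsComplex.empty_notMem {A : Finset (Finset α)} (hA : IsComplex A) : ∅ ∉ A :=
  fun h => hA.ne_empty h rfl

theorem isComplex_empty : IsComplex (∅ : Finset (Finset α)) := by
  simp [IsComplex]

theorem dimC_empty : dimC (∅ : Finset (Finset α)) = -1 := by
  simp [dimC]

theorem neg_one_le_dimC (X : Finset (Finset α)) : -1 ≤ dimC X := by
  simp only [dimC]; omega

theorem IsComplex.dimC_eq_neg_one_iff {A : Finset (Finset α)} (hA : IsComplex A) :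
    dimC A = -1 ↔ A = ∅ := by
  refine ⟨fun h => Finset.eq_empty_of_forall_notMem fun a ha => hA.ne_empty ha ?_,
    fun h => h ▸ dimC_empty⟩
  have : a.card ≤ A.sup Finset.card := Finset.le_sup ha
  simp only [dimC] at h
  exact Finset.card_eq_zero.mp (by omega)

theorem IsComplex.dimC_nonneg {A : Finset (Finset α)} (hA : IsComplex A) (hne : A.Nonempty) :
    0 ≤ dimC A := by
  have := neg_one_le_dimC A
  have := hA.dimC_eq_neg_one_iff.not.mpr hne.ne_empty
  omega

theorem exists_subset_forall_of_chain {c : Finset (Finset α)} (hc0 : c.Nonempty)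
    (hch : ∀ x ∈ c, ∀ y ∈ c, x ⊆ y ∨ y ⊆ x) : ∃ m ∈ c, ∀ z ∈ c, m ⊆ z := by
  obtain ⟨m, hm, hmin⟩ := c.exists_min_image Finset.card hc0
  refine ⟨m, hm, fun z hz => (hch m hm z hz).elim id fun hzm => ?_⟩
  rw [Finset.eq_of_subset_of_card_le hzm (hmin z hz)]

variable [DecidableEq α]

theorem mem_vertexSet {A : Finset (Finset α)} {v : α} : v ∈ vertexSet A ↔ ∃ a ∈ A, v ∈ a := by
  simp [vertexSet, Finset.mem_sup]

theorem subset_vertexSet {A : Finset (Finset α)} {a : Finset α} (ha : a ∈ A) :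
    a ⊆ vertexSet A :=
  Finset.le_sup (f := id) ha

theorem vertexSet_mono {A B : Finset (Finset α)} (h : A ⊆ B) : vertexSet A ⊆ vertexSet B :=
  Finset.sup_mono h

theorem mem_sphereOf {A : Finset (Finset α)} {x w : Finset α} :
    w ∈ sphereOf A x ↔ w ∈ A ∧ (∃ y ∈ A, x ⊆ y ∧ w ⊆ y) ∧ ¬x ⊆ w := by
  simp only [sphereOf, ballOf, starOf, Finset.mem_sdiff, Finset.mem_filter]
  tauto

theorem card_le_dimC_add_one {X : Finset (Finset α)} {a : Finset α} (ha : a ∈ insert ∅ X) :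
    (a.card : ℤ) ≤ dimC X + 1 := by
  have : a.card ≤ (insert ∅ X).sup Finset.card := Finset.le_sup ha
  simp only [dimC, Finset.sup_insert, Finset.card_empty, zero_le, sup_of_le_right]
    at this ⊢
  omega

theorem one_sub_chi {X : Finset (Finset α)} (hX : ∅ ∉ X) :
    1 - chi X = ∑ x ∈ insert ∅ X, (-1 : ℤ) ^ x.card := by
  rw [Finset.sum_insert hX, chi, Finset.card_empty, pow_zero, sub_eq_add_neg,
    ← Finset.sum_neg_distrib]
  congr 1
  refine Finset.sum_congr rfl fun x hx => ?_
  obtain ⟨n, hn⟩ := Nat.exists_eq_add_one_of_ne_zero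
    (Finset.card_ne_zero.mpr (Finset.nonempty_iff_ne_empty.mpr (ne_of_mem_of_not_mem hx hX)))
  rw [hn, pow_succ]
  simp

end Complexes

section LinksAndJoins

variable {α : Type*} [DecidableEq α]

def linkOf (A : Finset (Finset α)) (a : Finset α) : Finset (Finset α) :=
  A.filter fun s => Disjoint s a ∧ s ∪ a ∈ A

theorem mem_linkOf {A : Finset (Finset α)} {a s : Finset α} :
    s ∈ linkOf A a ↔ s ∈ A ∧ Disjoint s a ∧ s ∪ a ∈ A := by
  simp [linkOf]

theorem linkOf_empty (A : Finset (Finset α)) : linkOf A ∅ = A := by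
  ext s; simp [mem_linkOf]

theorem linkOf_subset (A : Finset (Finset α)) (a : Finset α) : linkOf A a ⊆ A :=
  Finset.filter_subset _ _

theorem isComplex_linkOf {A : Finset (Finset α)} (hA : IsComplex A) (a : Finset α) :
    IsComplex (linkOf A a) := by
  intro s hs
  obtain ⟨hsA, hsa, hsaA⟩ := mem_linkOf.mp hs
  refine ⟨hA.ne_empty hsA, fun t hts ht => mem_linkOf.mpr ⟨hA.mem_of_subset hsA hts ht,
    hsa.mono_left hts, hA.mem_of_subset hsaA (Finset.union_subset_union hts le_rfl) ?_⟩⟩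
  exact fun h => ht (Finset.union_eq_empty.mp h).1

theorem disjoint_vertexSet_linkOf (A : Finset (Finset α)) (a : Finset α) :
    Disjoint (vertexSet (linkOf A a)) a := by
  simp only [vertexSet, Finset.disjoint_sup_left, id]
  exact fun s hs => (mem_linkOf.mp hs).2.1

theorem mem_insert_empty_linkOf {A : Finset (Finset α)} {a p : Finset α}
    (ha : a ∈ insert ∅ A) :
    p ∈ insert ∅ (linkOf A a) ↔ p ∈ insert ∅ A ∧ Disjoint p a ∧ p ∪ a ∈ insert ∅ A := by
  rcases eq_or_ne p ∅ with rfl | hp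
  · simpa using ha
  · have hpa : p ∪ a ≠ ∅ := fun h => hp (Finset.union_eq_empty.mp h).1
    simp [hp, hpa, mem_linkOf]

theorem linkOf_linkOf {A : Finset (Finset α)} (hA : IsComplex A) {a b : Finset α}
    (hab : Disjoint a b) : linkOf (linkOf A a) b = linkOf A (a ∪ b) := by
  ext s
  simp only [mem_linkOf, Finset.disjoint_union_right]
  constructor
  · rintro ⟨⟨hsA, hsa, -⟩, hsb, -, -, hsba⟩
    exact ⟨hsA, ⟨hsa, hsb⟩, by rwa [Finset.union_right_comm, Finset.union_assoc] at hsba⟩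
  · rintro ⟨hsA, ⟨hsa, hsb⟩, hsab⟩
    have hs := hA.ne_empty hsA
    have hsaA : s ∪ a ∈ A := hA.mem_of_subset hsab
      (Finset.union_subset_union le_rfl Finset.subset_union_left)
      fun h => hs (Finset.union_eq_empty.mp h).1
    have hsbA : s ∪ b ∈ A := hA.mem_of_subset hsab
      (Finset.union_subset_union le_rfl Finset.subset_union_right)
      fun h => hs (Finset.union_eq_empty.mp h).1
    refine ⟨⟨hsA, hsa, hsaA⟩, hsb, hsbA, Finset.disjoint_union_left.mpr ⟨hsa, hab.symm⟩, ?_⟩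
    rwa [Finset.union_right_comm, Finset.union_assoc]

def simplexBoundary (x : Finset α) : Finset (Finset α) :=
  x.ssubsets.erase ∅

theorem mem_simplexBoundary {x y : Finset α} : y ∈ simplexBoundary x ↔ y ≠ ∅ ∧ y ⊂ x := by
  simp [simplexBoundary]

theorem insert_empty_simplexBoundary {x : Finset α} (hx : x ≠ ∅) :
    insert ∅ (simplexBoundary x) = x.ssubsets :=
  Finset.insert_erase (Finset.mem_ssubsets.mpr (Finset.empty_ssubset.mpr
    (Finset.nonempty_iff_ne_empty.mpr hx)))

theorem simplexBoundary_singleton (v : α) : simplexBoundary {v} = ∅ := by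
  ext y
  simp [mem_simplexBoundary, Finset.ssubset_singleton_iff]

theorem isComplex_simplexBoundary (x : Finset α) : IsComplex (simplexBoundary x) := by
  intro y hy
  obtain ⟨hy, hyx⟩ := mem_simplexBoundary.mp hy
  exact ⟨hy, fun z hzy hz => mem_simplexBoundary.mpr ⟨hz, hzy.trans_ssubset hyx⟩⟩

theorem vertexSet_simplexBoundary_subset (x : Finset α) : vertexSet (simplexBoundary x) ⊆ x :=
  Finset.sup_le fun _ hy => (mem_simplexBoundary.mp hy).2.subset

theorem IsComplex.simplexBoundary_ssubset {A : Finset (Finset α)} (hA : IsComplex A)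
    {x : Finset α} (hx : x ∈ A) : simplexBoundary x ⊂ A := by
  refine Finset.ssubset_iff_subset_ne.mpr ⟨fun y hy => ?_, fun h => ?_⟩
  · exact hA.mem_of_subset hx (mem_simplexBoundary.mp hy).2.subset (mem_simplexBoundary.mp hy).1
  · exact (mem_simplexBoundary.mp (h ▸ hx)).2.ne rfl

theorem dimC_simplexBoundary {x : Finset α} (hx : x ≠ ∅) :
    dimC (simplexBoundary x) = x.card - 2 := by
  obtain ⟨v, hv⟩ := Finset.nonempty_iff_ne_empty.mpr hx
  have hle : (simplexBoundary x).sup Finset.card ≤ x.card - 1 :=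
    Finset.sup_le fun y hy => by
      have := Finset.card_lt_card (mem_simplexBoundary.mp hy).2; omega
  have hge : x.card - 1 ≤ (simplexBoundary x).sup Finset.card := by
    rcases eq_or_ne (x.erase v) ∅ with he | he
    · simp [← Finset.card_erase_of_mem hv, he]
    · rw [← Finset.card_erase_of_mem hv]
      exact Finset.le_sup (mem_simplexBoundary.mpr ⟨he, Finset.erase_ssubset hv⟩)
  have hx1 : 1 ≤ x.card := Finset.card_pos.mpr ⟨v, hv⟩
  simp only [dimC]
  omega

theorem linkOf_simplexBoundary {x y : Finset α} (hy : y ∈ simplexBoundary x) :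
    linkOf (simplexBoundary x) y = simplexBoundary (x \ y) := by
  obtain ⟨hy, hyx⟩ := mem_simplexBoundary.mp hy
  ext s
  simp only [mem_linkOf, mem_simplexBoundary, Finset.ssubset_iff_subset_ne, ne_eq,
    Finset.union_eq_empty, Finset.subset_sdiff, hy, and_false, not_false_eq_true, true_and]
  constructor
  · rintro ⟨⟨hs, hsx, -⟩, hsy, hsyx, hsyx'⟩
    refine ⟨hs, ⟨hsx, hsy⟩, fun h => hsyx' ?_⟩
    rw [h, Finset.sdiff_union_of_subset hyx.subset]
  · rintro ⟨hs, ⟨hsx, hsy⟩, hsx'⟩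
    refine ⟨⟨hs, hsx, fun h => ?_⟩, hsy, Finset.union_subset hsx hyx.subset, fun h => hsx' ?_⟩
    · obtain ⟨v, hv⟩ := Finset.nonempty_iff_ne_empty.mpr hy
      exact Finset.disjoint_left.mp hsy (h ▸ hyx.subset hv) hv
    · rw [← h, Finset.union_sdiff_cancel_right hsy]

theorem one_sub_chi_simplexBoundary {x : Finset α} (hx : x ≠ ∅) :
    1 - chi (simplexBoundary x) = ((x.card : ℤ) - 1).negOnePow := by
  rw [one_sub_chi (isComplex_simplexBoundary x).empty_notMem, insert_empty_simplexBoundary hx,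
    Finset.ssubsets, Int.negOnePow_sub, Int.negOnePow_one, Units.val_mul,
    Int.coe_negOnePow_natCast, Units.val_neg, Units.val_one, mul_neg_one, eq_neg_iff_add_eq_zero,
    Finset.sum_erase_add _ _ (Finset.mem_powerset_self x), Finset.sum_powerset_neg_one_pow_card,
    if_neg hx]

theorem IsComplex.mem_insert_empty_of_subset {A : Finset (Finset α)} (hA : IsComplex A)
    {a b : Finset α} (ha : a ∈ insert ∅ A) (hba : b ⊆ a) : b ∈ insert ∅ A := by
  rcases eq_or_ne b ∅ with rfl | hb
  · exact Finset.mem_insert_self _ _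
  · rcases Finset.mem_insert.mp ha with rfl | ha
    · exact absurd (Finset.subset_empty.mp hba) hb
    · exact Finset.mem_insert_of_mem (hA.mem_of_subset ha hba hb)

theorem subset_vertexSet_of_mem_insert_empty {A : Finset (Finset α)} {a : Finset α}
    (ha : a ∈ insert ∅ A) : a ⊆ vertexSet A := by
  rcases Finset.mem_insert.mp ha with rfl | ha
  · exact Finset.empty_subset _
  · exact subset_vertexSet ha

theorem sup_card_insert_empty (X : Finset (Finset α)) :
    (insert ∅ X).sup Finset.card = X.sup Finset.card := by
  simp

-- `insert ∅` adjoins the empty face, so that a simplex of the join may lie in one factor only.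
def join (A B : Finset (Finset α)) : Finset (Finset α) :=
  (Finset.image₂ (· ∪ ·) (insert ∅ A) (insert ∅ B)).erase ∅

theorem insert_empty_join (A B : Finset (Finset α)) :
    insert ∅ (join A B) = Finset.image₂ (· ∪ ·) (insert ∅ A) (insert ∅ B) :=
  Finset.insert_erase (Finset.mem_image₂_of_mem (Finset.mem_insert_self ∅ A)
    (Finset.mem_insert_self ∅ B))

theorem mem_join {A B : Finset (Finset α)} {z : Finset α} :
    z ∈ join A B ↔ z ≠ ∅ ∧ ∃ a ∈ insert ∅ A, ∃ b ∈ insert ∅ B, a ∪ b = z := by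
  rw [join, Finset.mem_erase, Finset.mem_image₂]

theorem empty_notMem_join (A B : Finset (Finset α)) : ∅ ∉ join A B :=
  Finset.notMem_erase _ _

theorem join_empty_left {B : Finset (Finset α)} (hB : ∅ ∉ B) : join ∅ B = B := by
  ext z
  simp only [mem_join, Finset.mem_insert, Finset.notMem_empty, or_false, exists_eq_left,
    Finset.empty_union, exists_eq_right]
  exact ⟨fun h => h.2.resolve_left h.1, fun hz => ⟨ne_of_mem_of_not_mem hz hB, Or.inr hz⟩⟩

theorem join_empty_right {A : Finset (Finset α)} (hA : ∅ ∉ A) : join A ∅ = A := by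
  ext z
  simp only [mem_join, Finset.mem_insert, Finset.notMem_empty, or_false, exists_eq_left,
    Finset.union_empty, exists_eq_right]
  exact ⟨fun h => h.2.resolve_left h.1, fun hz => ⟨ne_of_mem_of_not_mem hz hA, Or.inr hz⟩⟩

theorem isComplex_join {A B : Finset (Finset α)} (hA : IsComplex A) (hB : IsComplex B) :
    IsComplex (join A B) := by
  intro z hz
  obtain ⟨hz, a, ha, b, hb, rfl⟩ := mem_join.mp hz
  refine ⟨hz, fun y hy hy0 => mem_join.mpr ⟨hy0, y ∩ a, ?_, y \ a, ?_, ?_⟩⟩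
  · exact hA.mem_insert_empty_of_subset ha Finset.inter_subset_right
  · refine hB.mem_insert_empty_of_subset hb fun v hv => ?_
    obtain ⟨hvy, hva⟩ := Finset.mem_sdiff.mp hv
    exact (Finset.mem_union.mp (hy hvy)).resolve_left hva
  · rw [Finset.union_comm, Finset.sdiff_union_inter]

theorem vertexSet_join_subset (A B : Finset (Finset α)) :
    vertexSet (join A B) ⊆ vertexSet A ∪ vertexSet B := by
  refine Finset.sup_le fun z hz => ?_
  obtain ⟨-, a, ha, b, hb, rfl⟩ := mem_join.mp hz
  exact Finset.union_subset_union (subset_vertexSet_of_mem_insert_empty ha)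
    (subset_vertexSet_of_mem_insert_empty hb)

theorem union_inter_eq_left {s t u : Finset α} (hs : s ⊆ u) (ht : Disjoint t u) :
    (s ∪ t) ∩ u = s := by
  rw [Finset.union_inter_distrib_right, Finset.inter_eq_left.mpr hs,
    Finset.disjoint_iff_inter_eq_empty.mp ht, Finset.union_empty]

theorem union_inter_eq_right {s t u : Finset α} (ht : t ⊆ u) (hs : Disjoint s u) :
    (s ∪ t) ∩ u = t := by
  rw [Finset.union_comm, union_inter_eq_left ht hs]

theorem disjoint_of_mem_insert_empty {A B : Finset (Finset α)}
    (hd : Disjoint (vertexSet A) (vertexSet B)) {a b : Finset α} (ha : a ∈ insert ∅ A)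
    (hb : b ∈ insert ∅ B) : Disjoint a b :=
  hd.mono (subset_vertexSet_of_mem_insert_empty ha) (subset_vertexSet_of_mem_insert_empty hb)

theorem injOn_union_of_disjoint_vertexSet {A B : Finset (Finset α)}
    (hd : Disjoint (vertexSet A) (vertexSet B)) :
    Set.InjOn (Function.uncurry (· ∪ ·) : Finset α × Finset α → Finset α)
      ↑(insert ∅ A ×ˢ insert ∅ B) := by
  rintro ⟨a, b⟩ hab ⟨a', b'⟩ hab' h
  simp only [Finset.coe_product, Set.mem_prod, Finset.mem_coe] at hab hab'
  simp only [Function.uncurry_apply_pair] at h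
  have hA : ∀ {a b}, a ∈ insert ∅ A → b ∈ insert ∅ B → (a ∪ b) ∩ vertexSet A = a :=
    fun ha hb => union_inter_eq_left (subset_vertexSet_of_mem_insert_empty ha)
      (hd.symm.mono_left (subset_vertexSet_of_mem_insert_empty hb))
  have hB : ∀ {a b}, a ∈ insert ∅ A → b ∈ insert ∅ B → (a ∪ b) ∩ vertexSet B = b :=
    fun ha hb => union_inter_eq_right (subset_vertexSet_of_mem_insert_empty hb)
      (hd.mono_left (subset_vertexSet_of_mem_insert_empty ha))
  exact Prod.ext (by rw [← hA hab.1 hab.2, h, hA hab'.1 hab'.2])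
    (by rw [← hB hab.1 hab.2, h, hB hab'.1 hab'.2])

theorem one_sub_chi_join {A B : Finset (Finset α)} (hA : ∅ ∉ A) (hB : ∅ ∉ B)
    (hd : Disjoint (vertexSet A) (vertexSet B)) :
    1 - chi (join A B) = (1 - chi A) * (1 - chi B) := by
  rw [one_sub_chi (empty_notMem_join A B), insert_empty_join, one_sub_chi hA, one_sub_chi hB,
    Finset.sum_mul_sum, ← Finset.sum_product', ← Finset.image_uncurry_product,
    Finset.sum_image (injOn_union_of_disjoint_vertexSet hd)]
  refine Finset.sum_congr rfl fun p hp => ?_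
  obtain ⟨ha, hb⟩ := Finset.mem_product.mp hp
  rw [Function.uncurry_apply_pair, Finset.card_union_of_disjoint
    (disjoint_of_mem_insert_empty hd ha hb), pow_add]

theorem dimC_join {A B : Finset (Finset α)} (hd : Disjoint (vertexSet A) (vertexSet B)) :
    dimC (join A B) = dimC A + dimC B + 1 := by
  obtain ⟨a, ha, hamax⟩ := Finset.exists_max_image (insert ∅ A) Finset.card
    (Finset.insert_nonempty _ _)
  obtain ⟨b, hb, hbmax⟩ := Finset.exists_max_image (insert ∅ B) Finset.card
    (Finset.insert_nonempty _ _)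
  have hA : A.sup Finset.card = a.card := by
    rw [← sup_card_insert_empty]; exact le_antisymm (Finset.sup_le hamax) (Finset.le_sup ha)
  have hB : B.sup Finset.card = b.card := by
    rw [← sup_card_insert_empty]; exact le_antisymm (Finset.sup_le hbmax) (Finset.le_sup hb)
  have hAB : (join A B).sup Finset.card = a.card + b.card := by
    rw [← sup_card_insert_empty, insert_empty_join]
    refine le_antisymm (Finset.sup_le fun z hz => ?_) ?_
    · obtain ⟨a', ha', b', hb', rfl⟩ := Finset.mem_image₂.mp hz
      exact (Finset.card_union_le _ _).trans (add_le_add (hamax a' ha') (hbmax b' hb'))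
    · rw [← Finset.card_union_of_disjoint (disjoint_of_mem_insert_empty hd ha hb)]
      exact Finset.le_sup (f := Finset.card) (Finset.mem_image₂_of_mem ha hb)
  simp only [dimC, hA, hB, hAB]
  push_cast
  ring

theorem linkOf_join {A B : Finset (Finset α)} (hd : Disjoint (vertexSet A) (vertexSet B))
    {a b : Finset α} (ha : a ∈ insert ∅ A) (hb : b ∈ insert ∅ B) :
    linkOf (join A B) (a ∪ b) = join (linkOf A a) (linkOf B b) := by
  have hab : a ∪ b ∈ insert ∅ (join A B) := by
    rw [insert_empty_join]; exact Finset.mem_image₂_of_mem ha hb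
  suffices h : insert ∅ (linkOf (join A B) (a ∪ b)) = insert ∅ (join (linkOf A a) (linkOf B b)) by
    rw [← Finset.erase_insert fun h => empty_notMem_join A B (linkOf_subset _ _ h), h,
      Finset.erase_insert (empty_notMem_join _ _)]
  have sA {x} : x ∈ insert ∅ A → x ⊆ vertexSet A := subset_vertexSet_of_mem_insert_empty
  have sB {x} : x ∈ insert ∅ B → x ⊆ vertexSet B := subset_vertexSet_of_mem_insert_empty
  ext z
  simp only [mem_insert_empty_linkOf hab, insert_empty_join, Finset.mem_image₂,
    mem_insert_empty_linkOf ha, mem_insert_empty_linkOf hb]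
  constructor
  · rintro ⟨⟨p, hp, q, hq, rfl⟩, hdis, p', hp', q', hq', h⟩
    simp only [Finset.disjoint_union_left, Finset.disjoint_union_right] at hdis
    have hpa : (p' ∪ q') ∩ vertexSet A = p' :=
      union_inter_eq_left (sA hp') (hd.symm.mono_left (sB hq'))
    have hqb : (p' ∪ q') ∩ vertexSet B = q' :=
      union_inter_eq_right (sB hq') (hd.mono_left (sA hp'))
    rw [h, Finset.union_union_union_comm, union_inter_eq_left (Finset.union_subset (sA hp) (sA ha))
      (hd.symm.mono_left (Finset.union_subset (sB hq) (sB hb)))] at hpa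
    rw [h, Finset.union_union_union_comm, union_inter_eq_right (Finset.union_subset (sB hq) (sB hb))
      (hd.mono_left (Finset.union_subset (sA hp) (sA ha)))] at hqb
    exact ⟨p, ⟨hp, hdis.1.1, hpa ▸ hp'⟩, q, ⟨hq, hdis.2.2, hqb ▸ hq'⟩, rfl⟩
  · rintro ⟨p, ⟨hp, hpa, hpa'⟩, q, ⟨hq, hqb, hqb'⟩, rfl⟩
    refine ⟨⟨p, hp, q, hq, rfl⟩, ?_, p ∪ a, hpa', q ∪ b, hqb', Finset.union_union_union_comm ..⟩
    simp only [Finset.disjoint_union_left, Finset.disjoint_union_right]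
    exact ⟨⟨hpa, (disjoint_of_mem_insert_empty hd ha hq).symm⟩,
      disjoint_of_mem_insert_empty hd hp hb, hqb⟩

theorem IsComplex.sphereOf_eq_join {A : Finset (Finset α)} (hA : IsComplex A) {x : Finset α}
    (hx : x ∈ A) : sphereOf A x = join (simplexBoundary x) (linkOf A x) := by
  have hx0 := hA.ne_empty hx
  ext w
  rw [mem_sphereOf, mem_join, insert_empty_simplexBoundary hx0]
  simp only [Finset.mem_ssubsets, mem_insert_empty_linkOf (Finset.mem_insert_of_mem hx)]
  constructor
  · rintro ⟨hw, ⟨y, hy, hxy, hwy⟩, hxw⟩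
    refine ⟨hA.ne_empty hw, w ∩ x, ?_, w \ x, ⟨?_, Finset.sdiff_disjoint, ?_⟩,
      by rw [Finset.union_comm, Finset.sdiff_union_inter]⟩
    · exact Finset.ssubset_iff_subset_ne.mpr ⟨Finset.inter_subset_right,
        fun h => hxw (h ▸ Finset.inter_subset_left)⟩
    · exact hA.mem_insert_empty_of_subset (Finset.mem_insert_of_mem hw) Finset.sdiff_subset
    · exact hA.mem_insert_empty_of_subset (Finset.mem_insert_of_mem hy)
        (Finset.union_subset (Finset.sdiff_subset.trans hwy) hxy)
  · rintro ⟨hw, p, hpx, s, ⟨-, hsx, hsxA⟩, rfl⟩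
    have hsxA : s ∪ x ∈ A :=
      Finset.mem_of_mem_insert_of_ne hsxA fun h => hx0 (Finset.union_eq_empty.mp h).2
    have hps : p ∪ s ⊆ s ∪ x := Finset.union_subset
      (hpx.subset.trans Finset.subset_union_right) Finset.subset_union_left
    refine ⟨hA.mem_of_subset hsxA hps hw, ⟨s ∪ x, hsxA, Finset.subset_union_right, hps⟩,
      fun h => hpx.not_subset fun v hv => ?_⟩
    exact (Finset.mem_union.mp (h hv)).resolve_right fun hvs =>
      Finset.disjoint_left.mp hsx hvs hv

theorem IsComplex.sphereOf_singleton {A : Finset (Finset α)} (hA : IsComplex A) {v : α}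
    (hv : {v} ∈ A) : sphereOf A {v} = linkOf A {v} := by
  rw [hA.sphereOf_eq_join hv, simplexBoundary_singleton,
    join_empty_left (isComplex_linkOf hA _).empty_notMem]

theorem IsComplex.linkOf_eq_linkOf_sphereOf {A : Finset (Finset α)} (hA : IsComplex A)
    {a : Finset α} (ha : a ∈ A) {v : α} (hv : v ∈ a) :
    linkOf A a = linkOf (sphereOf A {v}) (a.erase v) ∧ a.erase v ∈ insert ∅ (sphereOf A {v}) := by
  have hvA : {v} ∈ A := hA.mem_of_subset ha (Finset.singleton_subset_iff.mpr hv)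
    (Finset.singleton_ne_empty v)
  have hva : {v} ∪ a.erase v = a := by rw [← Finset.insert_eq, Finset.insert_erase hv]
  rw [hA.sphereOf_singleton hvA, linkOf_linkOf hA (by simp), hva, mem_insert_empty_linkOf
    (Finset.mem_insert_of_mem hvA), Finset.union_comm, hva]
  exact ⟨rfl, hA.mem_insert_empty_of_subset (Finset.mem_insert_of_mem ha) (Finset.erase_subset _ _),
    by simp, Finset.mem_insert_of_mem ha⟩

theorem IsComplex.filter_mem_eq_image_linkOf {X : Finset (Finset α)} (hX : IsComplex X) {v : α}
    (hv : {v} ∈ X) : X.filter (v ∈ ·) = (insert ∅ (linkOf X {v})).image (insert v) := by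
  ext t
  simp only [Finset.mem_filter, Finset.mem_image, Finset.union_singleton,
    mem_insert_empty_linkOf (Finset.mem_insert_of_mem hv), Finset.disjoint_singleton_right]
  constructor
  · rintro ⟨ht, hvt⟩
    refine ⟨t.erase v, ⟨hX.mem_insert_empty_of_subset (Finset.mem_insert_of_mem ht)
      (Finset.erase_subset v t), Finset.notMem_erase v t, ?_⟩, Finset.insert_erase hvt⟩
    rw [Finset.insert_erase hvt]
    exact Finset.mem_insert_of_mem ht
  · rintro ⟨s, ⟨-, -, hs⟩, rfl⟩
    exact ⟨Finset.mem_of_mem_insert_of_ne hs (Finset.insert_ne_empty v s),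
      Finset.mem_insert_self v s⟩

-- Deleting the vertex `v` removes exactly the cone `v * link(v)`.
theorem IsComplex.chi_eq_chi_filter_notMem_add {X : Finset (Finset α)} (hX : IsComplex X)
    {v : α} (hv : {v} ∈ X) :
    chi X = chi (X.filter (v ∉ ·)) + (1 - chi (linkOf X {v})) := by
  have hvs : ∀ s ∈ insert ∅ (linkOf X {v}), v ∉ s := fun s hs =>
    Finset.disjoint_singleton_right.mp
      ((mem_insert_empty_linkOf (Finset.mem_insert_of_mem hv)).mp hs).2.1
  rw [chi, ← Finset.sum_filter_not_add_sum_filter X (v ∈ ·), hX.filter_mem_eq_image_linkOf hv,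
    one_sub_chi (isComplex_linkOf hX _).empty_notMem, chi,
    Finset.sum_image fun s hs t ht h => by
      rw [← Finset.erase_insert (hvs s hs), h, Finset.erase_insert (hvs t ht)]]
  refine congrArg _ (Finset.sum_congr rfl fun s hs => ?_)
  rw [Finset.card_insert_of_notMem (hvs s hs), Nat.add_sub_cancel]

-- `1 - χ` is multiplicative under joins (`one_sub_chi_join`), and this form of the Euler
-- characteristic condition also covers the empty sphere.
theorem isDSSphere_iff {q : ℤ} {X : Finset (Finset α)} :
    IsDSSphere q X ↔ IsDSManifold q X ∧ 1 - chi X = (q + 1).negOnePow := by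
  constructor
  · rintro (_ | ⟨q, X, hC, hq, hS, hχ⟩)
    · exact ⟨⟨isComplex_empty, dimC_empty, by simp⟩, by simp [chi]⟩
    · refine ⟨⟨hC, hq, hS⟩, ?_⟩
      rw [hχ, show (q : ℤ) + 1 = ((q + 1 : ℕ) : ℤ) by push_cast; rfl, Int.coe_negOnePow_natCast,
        pow_succ]
      ring
  · rintro ⟨⟨hC, hq, hS⟩, hχ⟩
    rcases (hq ▸ neg_one_le_dimC X).eq_or_lt with rfl | hq0
    · rw [hC.dimC_eq_neg_one_iff.mp hq]
      exact .empty
    · lift q to ℕ using (by omega)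
      refine .step q X hC hq hS ?_
      rw [show (q : ℤ) + 1 = ((q + 1 : ℕ) : ℤ) by push_cast; rfl, Int.coe_negOnePow_natCast,
        pow_succ] at hχ
      linarith

theorem IsDSSphere.isDSManifold {q : ℤ} {X : Finset (Finset α)} (h : IsDSSphere q X) :
    IsDSManifold q X :=
  (isDSSphere_iff.mp h).1

theorem IsDSSphere.isComplex {q : ℤ} {X : Finset (Finset α)} (h : IsDSSphere q X) :
    IsComplex X :=
  h.isDSManifold.1

theorem IsDSSphere.dimC_eq {q : ℤ} {X : Finset (Finset α)} (h : IsDSSphere q X) : dimC X = q :=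
  h.isDSManifold.2.1

theorem IsDSSphere.one_sub_chi {q : ℤ} {X : Finset (Finset α)} (h : IsDSSphere q X) :
    1 - chi X = (q + 1).negOnePow :=
  (isDSSphere_iff.mp h).2

theorem isDSSphere_linkOf {p : ℤ} {X : Finset (Finset α)} (h : IsDSSphere p X) {a : Finset α}
    (ha : a ∈ insert ∅ X) : IsDSSphere (p - a.card) (linkOf X a) := by
  obtain ⟨n, hn⟩ : ∃ n, a.card = n := ⟨_, rfl⟩
  induction n generalizing p X a with
  | zero => rwa [Finset.card_eq_zero.mp hn, linkOf_empty, Finset.card_empty, Nat.cast_zero,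
      sub_zero]
  | succ n ih =>
    have ha : a ∈ X := Finset.mem_of_mem_insert_of_ne ha fun h => by simp [h] at hn
    obtain ⟨v, hv⟩ := Finset.card_pos.mp (by omega : 0 < a.card)
    have hcard : (a.erase v).card = n := by rw [Finset.card_erase_of_mem hv, hn, Nat.add_sub_cancel]
    have hsph := h.isDSManifold.2.2 {v} (h.isComplex.mem_of_subset ha
      (Finset.singleton_subset_iff.mpr hv) (Finset.singleton_ne_empty v))
    obtain ⟨hlink, hmem⟩ := h.isComplex.linkOf_eq_linkOf_sphereOf ha hv
    rw [hlink, hn]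
    convert ih hsph hmem hcard using 1
    rw [hcard]
    push_cast
    ring

theorem disjoint_vertexSet_join_linkOf {A B : Finset (Finset α)}
    (hd : Disjoint (vertexSet A) (vertexSet B)) {a b : Finset α} (ha : a ∈ insert ∅ A)
    (hb : b ∈ insert ∅ B) : Disjoint (a ∪ b) (vertexSet (join (linkOf A a) (linkOf B b))) := by
  refine Disjoint.mono_right (vertexSet_join_subset _ _) ?_
  simp only [Finset.disjoint_union_left, Finset.disjoint_union_right]
  exact ⟨⟨(disjoint_vertexSet_linkOf A a).symm, (hd.mono (vertexSet_mono (linkOf_subset A a))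
    (subset_vertexSet_of_mem_insert_empty hb)).symm⟩, ⟨hd.mono
    (subset_vertexSet_of_mem_insert_empty ha) (vertexSet_mono (linkOf_subset B b)),
    (disjoint_vertexSet_linkOf B b).symm⟩⟩

-- Half of a joint induction: joins need boundaries of simplices up to their own size (`hbd`),
-- while `isDSSphere_simplexBoundary` needs joins of smaller spheres.
theorem isDSSphere_join_of_card_le (n : ℕ)
    (hbd : ∀ z : Finset α, z ≠ ∅ → z.card ≤ n → IsDSSphere (z.card - 2) (simplexBoundary z))
    {p r : ℤ} {A B : Finset (Finset α)} (hA : IsDSSphere p A) (hB : IsDSSphere r B)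
    (hd : Disjoint (vertexSet A) (vertexSet B)) (hn : p + r + 2 ≤ n) :
    IsDSSphere (p + r + 1) (join A B) := by
  induction n using Nat.strong_induction_on generalizing p r A B with
  | _ n ih =>
  rcases A.eq_empty_or_nonempty with rfl | hA0
  · rw [join_empty_left hB.isComplex.empty_notMem]
    convert hB using 1
    linarith [hA.dimC_eq.symm.trans dimC_empty]
  rcases B.eq_empty_or_nonempty with rfl | hB0
  · rw [join_empty_right hA.isComplex.empty_notMem]
    convert hA using 1
    linarith [hB.dimC_eq.symm.trans dimC_empty]
  have hp : 0 ≤ p := hA.dimC_eq ▸ hA.isComplex.dimC_nonneg hA0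
  have hr : 0 ≤ r := hB.dimC_eq ▸ hB.isComplex.dimC_nonneg hB0
  obtain ⟨m, rfl⟩ : ∃ m, n = m + 1 := ⟨n - 1, by omega⟩
  have hbd' : ∀ z : Finset α, z ≠ ∅ → z.card ≤ m → _ := fun z hz hzm => hbd z hz (by omega)
  have hAB := isComplex_join hA.isComplex hB.isComplex
  refine isDSSphere_iff.mpr
    ⟨⟨hAB, by rw [dimC_join hd, hA.dimC_eq, hB.dimC_eq], fun z hz => ?_⟩, ?_⟩
  · obtain ⟨hz0, a, ha, b, hb, rfl⟩ := mem_join.mp hz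
    rw [hAB.sphereOf_eq_join hz, linkOf_join hd ha hb]
    have hcard := Finset.card_union_of_disjoint (disjoint_of_mem_insert_empty hd ha hb)
    have hz1 : 1 ≤ (a ∪ b).card := Finset.card_pos.mpr (Finset.nonempty_iff_ne_empty.mpr hz0)
    have hza := card_le_dimC_add_one (Finset.mem_insert_of_mem hz)
    rw [dimC_join hd, hA.dimC_eq, hB.dimC_eq] at hza
    have hlinks := ih m m.lt_succ_self hbd' (isDSSphere_linkOf hA ha) (isDSSphere_linkOf hB hb)
      (hd.mono (vertexSet_mono (linkOf_subset A a)) (vertexSet_mono (linkOf_subset B b)))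
      (by omega)
    convert ih m m.lt_succ_self hbd' (hbd _ hz0 (by omega)) hlinks
      ((disjoint_vertexSet_join_linkOf hd ha hb).mono_left (vertexSet_simplexBoundary_subset _))
      (by omega) using 1
    omega
  · rw [one_sub_chi_join hA.isComplex.empty_notMem hB.isComplex.empty_notMem hd, hA.one_sub_chi,
      hB.one_sub_chi, ← Units.val_mul, ← Int.negOnePow_add]
    ring_nf

theorem isDSSphere_simplexBoundary {x : Finset α} (hx : x ≠ ∅) :
    IsDSSphere (x.card - 2) (simplexBoundary x) := by
  induction hn : x.card using Nat.strong_induction_on generalizing x with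
  | _ n ih =>
  subst hn
  obtain h1 | h2 : x.card = 1 ∨ 2 ≤ x.card := by
    have := Finset.card_pos.mpr (Finset.nonempty_iff_ne_empty.mpr hx); omega
  · obtain ⟨v, rfl⟩ := Finset.card_eq_one.mp h1
    rw [simplexBoundary_singleton, Finset.card_singleton]
    exact .empty
  have hB := isComplex_simplexBoundary x
  refine isDSSphere_iff.mpr ⟨⟨hB, dimC_simplexBoundary hx, fun y hy => ?_⟩, ?_⟩
  · obtain ⟨hy0, hyx⟩ := mem_simplexBoundary.mp hy
    rw [hB.sphereOf_eq_join hy, linkOf_simplexBoundary hy]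
    have hxy0 : x \ y ≠ ∅ :=
      Finset.nonempty_iff_ne_empty.mp (Finset.sdiff_nonempty.mpr hyx.not_subset)
    have hcard := Finset.card_sdiff_add_card_eq_card hyx.subset
    have hy1 := Finset.card_pos.mpr (Finset.nonempty_iff_ne_empty.mpr hy0)
    have hxy1 := Finset.card_pos.mpr (Finset.nonempty_iff_ne_empty.mpr hxy0)
    have := isDSSphere_join_of_card_le (x.card - 2)
      (fun z hz hzn => ih z.card (by omega) hz rfl) (ih y.card (by omega) hy0 rfl)
      (ih (x \ y).card (by omega) hxy0 rfl) (Finset.disjoint_sdiff.mono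
        (vertexSet_simplexBoundary_subset y) (vertexSet_simplexBoundary_subset _)) (by omega)
    convert this using 1
    omega
  · rw [one_sub_chi_simplexBoundary hx]
    ring_nf

theorem isDSSphere_join {p r : ℤ} {A B : Finset (Finset α)} (hA : IsDSSphere p A)
    (hB : IsDSSphere r B) (hd : Disjoint (vertexSet A) (vertexSet B)) :
    IsDSSphere (p + r + 1) (join A B) :=
  isDSSphere_join_of_card_le (p + r + 2).toNat (fun _ hz _ => isDSSphere_simplexBoundary hz)
    hA hB hd (Int.self_le_toNat _)

theorem isDSManifold_iff_linkOf {q : ℤ} {A : Finset (Finset α)} :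
    IsDSManifold q A ↔ IsComplex A ∧ dimC A = q ∧
      ∀ a ∈ A, IsDSSphere (q - a.card) (linkOf A a) := by
  refine ⟨fun ⟨hA, hq, hS⟩ => ⟨hA, hq, fun a ha => ?_⟩,
    fun ⟨hA, hq, hL⟩ => ⟨hA, hq, fun x hx => ?_⟩⟩
  · obtain ⟨v, hv⟩ := Finset.nonempty_iff_ne_empty.mpr (hA.ne_empty ha)
    obtain ⟨hlink, hmem⟩ := hA.linkOf_eq_linkOf_sphereOf ha hv
    have := isDSSphere_linkOf (hS {v} (hA.mem_of_subset ha (Finset.singleton_subset_iff.mpr hv)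
      (Finset.singleton_ne_empty v))) hmem
    rw [hlink]
    convert this using 1
    rw [Finset.card_erase_of_mem hv, Nat.cast_sub (Finset.card_pos.mpr ⟨v, hv⟩)]
    ring
  · rw [hA.sphereOf_eq_join hx]
    convert isDSSphere_join (isDSSphere_simplexBoundary (hA.ne_empty hx)) (hL x hx)
      ((disjoint_vertexSet_linkOf A x).symm.mono_left (vertexSet_simplexBoundary_subset x))
      using 1
    ring

end LinksAndJoins

section Relabelling

variable {α β : Type*} [DecidableEq β] {f : α → β}

theorem isComplex_image {X : Finset (Finset α)} (hX : IsComplex X) :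
    IsComplex (X.image (Finset.image f)) := by
  simp only [IsComplex, Finset.mem_image, forall_exists_index, and_imp,
    forall_apply_eq_imp_iff₂, ne_eq, Finset.image_eq_empty]
  refine fun x hx => ⟨hX.ne_empty hx, fun y hy hy0 => ?_⟩
  obtain ⟨y, hyx, rfl⟩ := Finset.subset_image_iff.mp hy
  exact ⟨y, hX.mem_of_subset hx hyx (by simpa using hy0), rfl⟩

theorem dimC_image (hf : Function.Injective f) (X : Finset (Finset α)) :
    dimC (X.image (Finset.image f)) = dimC X := by
  simp [dimC, Finset.sup_image, Function.comp_def, Finset.card_image_of_injective _ hf]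

theorem chi_image (hf : Function.Injective f) (X : Finset (Finset α)) :
    chi (X.image (Finset.image f)) = chi X := by
  simp [chi, Finset.sum_image fun _ _ _ _ h => Finset.image_injective hf h,
    Finset.card_image_of_injective _ hf]

theorem sphereOf_image [DecidableEq α] (hf : Function.Injective f) (X : Finset (Finset α))
    (x : Finset α) :
    sphereOf (X.image (Finset.image f)) (x.image f) = (sphereOf X x).image (Finset.image f) := by
  ext w
  simp only [mem_sphereOf, Finset.mem_image]
  constructor
  · rintro ⟨⟨a, ha, rfl⟩, ⟨-, ⟨y, hy, rfl⟩, hxy, hay⟩, hxa⟩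
    rw [Finset.image_subset_image_iff hf] at hxy hay hxa
    exact ⟨a, ⟨ha, ⟨y, hy, hxy, hay⟩, hxa⟩, rfl⟩
  · rintro ⟨a, ⟨ha, ⟨y, hy, hxy, hay⟩, hxa⟩, rfl⟩
    refine ⟨⟨a, ha, rfl⟩, ⟨_, ⟨y, hy, rfl⟩, ?_⟩, ?_⟩ <;>
      simp only [Finset.image_subset_image_iff hf] <;> tauto

theorem isDSSphere_image [DecidableEq α] (hf : Function.Injective f) {q : ℤ}
    {X : Finset (Finset α)} (h : IsDSSphere q X) : IsDSSphere q (X.image (Finset.image f)) := by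
  induction h with
  | empty => exact .empty
  | step q X hC hq hS hχ ih =>
    refine .step q _ (isComplex_image hC) (by rwa [dimC_image hf]) ?_ (by rwa [chi_image hf])
    simp only [Finset.mem_image, forall_exists_index, and_imp, forall_apply_eq_imp_iff₂]
    exact fun x hx => sphereOf_image hf X x ▸ ih x hx

end Relabelling

section BarycentricRefinement

variable {α : Type*} [DecidableEq α]

theorem mem_chainComplex {W c : Finset (Finset α)} :
    c ∈ chainComplex W ↔ c ⊆ W ∧ c ≠ ∅ ∧ ∀ x ∈ c, ∀ y ∈ c, x ⊆ y ∨ y ⊆ x := by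
  simp [chainComplex]

theorem isComplex_chainComplex (W : Finset (Finset α)) : IsComplex (chainComplex W) := by
  intro c hc
  obtain ⟨hcW, hc0, hch⟩ := mem_chainComplex.mp hc
  exact ⟨hc0, fun d hdc hd0 => mem_chainComplex.mpr
    ⟨hdc.trans hcW, hd0, fun x hx y hy => hch x (hdc hx) y (hdc hy)⟩⟩

theorem singleton_mem_chainComplex {W : Finset (Finset α)} {y : Finset α} (hy : y ∈ W) :
    {y} ∈ chainComplex W :=
  mem_chainComplex.mpr ⟨Finset.singleton_subset_iff.mpr hy, Finset.singleton_ne_empty y,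
    by simp⟩

theorem vertexSet_chainComplex (W : Finset (Finset α)) : vertexSet (chainComplex W) = W := by
  ext y
  simp only [mem_vertexSet]
  exact ⟨fun ⟨c, hc, hyc⟩ => (mem_chainComplex.mp hc).1 hyc,
    fun hy => ⟨{y}, singleton_mem_chainComplex hy, Finset.mem_singleton_self y⟩⟩

theorem card_le_sup_card_of_mem_chainComplex {W c : Finset (Finset α)} (hW : IsComplex W)
    (hc : c ∈ chainComplex W) : c.card ≤ W.sup Finset.card := by
  obtain ⟨hcW, -, hch⟩ := mem_chainComplex.mp hc
  have hinj : Set.InjOn Finset.card (c : Set (Finset α)) := fun x hx y hy hxy =>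
    (hch x hx y hy).elim (Finset.eq_of_subset_of_card_le · hxy.ge)
      fun h => (Finset.eq_of_subset_of_card_le h hxy.le).symm
  have hIcc : c.image Finset.card ⊆ Finset.Icc 1 (W.sup Finset.card) := by
    simp only [Finset.subset_iff, Finset.mem_image, Finset.mem_Icc, forall_exists_index, and_imp,
      forall_apply_eq_imp_iff₂]
    exact fun x hx => ⟨Finset.card_pos.mpr (Finset.nonempty_iff_ne_empty.mpr
      (hW.ne_empty (hcW hx))), Finset.le_sup (hcW hx)⟩
  simpa [Finset.card_image_of_injOn hinj] using Finset.card_le_card hIcc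

theorem exists_mem_chainComplex_card_eq {W : Finset (Finset α)} (hW : IsComplex W)
    {y : Finset α} (hy : y ∈ W) :
    ∃ c ∈ chainComplex W, c.card = y.card ∧ ∀ z ∈ c, z ⊆ y := by
  induction y using Finset.induction_on with
  | empty => exact absurd hy hW.empty_notMem
  | insert v s hvs ih =>
    rcases eq_or_ne s ∅ with rfl | hs
    · exact ⟨_, singleton_mem_chainComplex hy, by simp, by simp⟩
    obtain ⟨c, hc, hcs, hcsub⟩ := ih (hW.mem_of_subset hy (Finset.subset_insert v s) hs)
    obtain ⟨hcW, -, hch⟩ := mem_chainComplex.mp hc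
    have hyc : insert v s ∉ c := fun h => hvs (hcsub _ h (Finset.mem_insert_self v s))
    refine ⟨insert (insert v s) c, mem_chainComplex.mpr ⟨Finset.insert_subset hy hcW,
      Finset.insert_ne_empty _ _, ?_⟩, by rw [Finset.card_insert_of_notMem hyc, hcs,
      Finset.card_insert_of_notMem hvs], ?_⟩
    · simp only [Finset.mem_insert, forall_eq_or_imp, subset_refl, true_or, true_and]
      exact ⟨fun z hz => Or.inr ((hcsub z hz).trans (Finset.subset_insert v s)),
        fun z hz => ⟨Or.inl ((hcsub z hz).trans (Finset.subset_insert v s)), hch z hz⟩⟩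
    · simp only [Finset.mem_insert, forall_eq_or_imp, subset_refl, true_and]
      exact fun z hz => (hcsub z hz).trans (Finset.subset_insert v s)

theorem dimC_chainComplex {W : Finset (Finset α)} (hW : IsComplex W) :
    dimC (chainComplex W) = dimC W := by
  have hle := Finset.sup_le fun c hc => card_le_sup_card_of_mem_chainComplex hW hc
  have hge : W.sup Finset.card ≤ (chainComplex W).sup Finset.card := Finset.sup_le fun y hy => by
    obtain ⟨c, hc, hcy, -⟩ := exists_mem_chainComplex_card_eq hW hy
    exact hcy ▸ Finset.le_sup hc
  simp only [dimC, le_antisymm hle hge]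

theorem mem_insert_empty_chainComplex {W c : Finset (Finset α)} :
    c ∈ insert ∅ (chainComplex W) ↔ c ⊆ W ∧ ∀ x ∈ c, ∀ y ∈ c, x ⊆ y ∨ y ⊆ x := by
  rcases eq_or_ne c ∅ with rfl | hc
  · simp
  · simp [hc, mem_chainComplex]

theorem linkOf_chainComplex {W c : Finset (Finset α)} (hcW : c ⊆ W)
    (hc : ∀ x ∈ c, ∀ y ∈ c, x ⊆ y ∨ y ⊆ x) :
    linkOf (chainComplex W) c =
      chainComplex (W.filter fun y => y ∉ c ∧ ∀ z ∈ c, y ⊆ z ∨ z ⊆ y) := by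
  ext e
  simp only [mem_linkOf, mem_chainComplex, Finset.subset_iff, Finset.mem_filter,
    Finset.mem_union, ne_eq, Finset.union_eq_empty, Finset.disjoint_left]
  constructor
  · rintro ⟨⟨heW, he0, hch⟩, hec, -, -, hch'⟩
    exact ⟨fun y hy => ⟨heW hy, hec hy, fun z hz => hch' y (.inl hy) z (.inr hz)⟩, he0, hch⟩
  · rintro ⟨heW, he0, hch⟩
    refine ⟨⟨fun y hy => (heW hy).1, he0, hch⟩, fun y hy => (heW hy).2.1,
      fun y hy => hy.elim (fun hy => (heW hy).1) (fun hy => hcW hy), fun h => he0 h.1, ?_⟩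
    rintro x (hx | hx) y (hy | hy)
    · exact hch x hx y hy
    · exact (heW hx).2.2 y hy
    · exact ((heW hy).2.2 x hx).symm
    · exact hc x hx y hy

theorem chainComplex_union {U V : Finset (Finset α)} (hUV : ∀ u ∈ U, ∀ v ∈ V, u ⊆ v) :
    chainComplex (U ∪ V) = join (chainComplex U) (chainComplex V) := by
  ext c
  simp only [mem_join, mem_insert_empty_chainComplex, mem_chainComplex]
  constructor
  · rintro ⟨hcUV, hc0, hch⟩
    have hsub {p : Finset α → Prop} [DecidablePred p] : c.filter p ⊆ c := Finset.filter_subset _ _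
    refine ⟨hc0, c.filter (· ∈ U), ⟨fun x hx => (Finset.mem_filter.mp hx).2,
      fun x hx y hy => hch x (hsub hx) y (hsub hy)⟩, c.filter (· ∉ U), ⟨fun x hx => ?_,
      fun x hx y hy => hch x (hsub hx) y (hsub hy)⟩, Finset.filter_union_filter_not_eq _ c⟩
    obtain ⟨hxc, hxU⟩ := Finset.mem_filter.mp hx
    exact (Finset.mem_union.mp (hcUV hxc)).resolve_left hxU
  · rintro ⟨hc0, a, ⟨haU, hach⟩, b, ⟨hbV, hbch⟩, rfl⟩
    refine ⟨Finset.union_subset_union haU hbV, hc0, ?_⟩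
    simp only [Finset.mem_union]
    rintro x (hx | hx) y (hy | hy)
    · exact hach x hx y hy
    · exact .inl (hUV x (haU hx) y (hbV hy))
    · exact .inr (hUV y (haU hy) x (hbV hx))
    · exact hbch x hx y hy

theorem chi_chainComplex {W : Finset (Finset α)} (hW : IsComplex W) :
    chi (chainComplex W) = chi W := by
  induction W using Finset.strongInduction with
  | H W ih =>
  rcases W.eq_empty_or_nonempty with rfl | hne
  · rfl
  obtain ⟨y, hy, hmax⟩ := W.exists_max_image Finset.card hne
  have hsup : ∀ z ∈ W, y ⊆ z → z = y := fun z hz hyz =>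
    (Finset.eq_of_subset_of_card_le hyz (hmax z hz)).symm
  have hWy : IsComplex (W.erase y) := fun z hz => by
    obtain ⟨hzy, hzW⟩ := Finset.mem_erase.mp hz
    exact ⟨hW.ne_empty hzW, fun t htz ht => Finset.mem_erase.mpr
      ⟨fun h => hzy (hsup z hzW (h ▸ htz)), hW.mem_of_subset hzW htz ht⟩⟩
  have hdel : (chainComplex W).filter (y ∉ ·) = chainComplex (W.erase y) := by
    ext c
    simp only [Finset.mem_filter, mem_chainComplex, Finset.subset_erase]
    tauto
  have hlink : linkOf (chainComplex W) {y} = chainComplex (simplexBoundary y) := by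
    rw [linkOf_chainComplex (by simpa using hy) (by simp)]
    congr 1
    ext z
    simp only [Finset.mem_filter, Finset.mem_singleton, forall_eq, mem_simplexBoundary]
    constructor
    · rintro ⟨hz, hzy, hzy' | hyz⟩
      · exact ⟨hW.ne_empty hz, Finset.ssubset_iff_subset_ne.mpr ⟨hzy', hzy⟩⟩
      · exact absurd (hsup z hz hyz) hzy
    · rintro ⟨hz, hzy⟩
      exact ⟨hW.mem_of_subset hy hzy.subset hz, hzy.ne, .inl hzy.subset⟩
  have hy1 : 1 ≤ y.card := Finset.card_pos.mpr (Finset.nonempty_iff_ne_empty.mpr (hW.ne_empty hy))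
  rw [(isComplex_chainComplex W).chi_eq_chi_filter_notMem_add (singleton_mem_chainComplex hy),
    hdel, hlink,
    ih _ (Finset.erase_ssubset hy) hWy,
    ih _ (hW.simplexBoundary_ssubset hy) (isComplex_simplexBoundary y),
    one_sub_chi_simplexBoundary (hW.ne_empty hy), chi, chi, ← Finset.sum_erase_add _ _ hy,
    ← Int.coe_negOnePow_natCast, Nat.cast_sub hy1, Nat.cast_one]

theorem chainComplex_image {β : Type*} [DecidableEq β] {W : Finset (Finset α)}
    {g : Finset α → Finset β} (hg : ∀ a ∈ W, ∀ b ∈ W, g a ⊆ g b ↔ a ⊆ b) :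
    chainComplex (W.image g) = (chainComplex W).image (Finset.image g) := by
  ext c'
  simp only [mem_chainComplex, Finset.mem_image]
  constructor
  · rintro ⟨hc'W, hc'0, hch⟩
    obtain ⟨c, hcW, rfl⟩ := Finset.subset_image_iff.mp hc'W
    refine ⟨c, ⟨hcW, fun h => hc'0 (by simp [h]), fun x hx y hy => ?_⟩, rfl⟩
    rw [← hg x (hcW hx) y (hcW hy), ← hg y (hcW hy) x (hcW hx)]
    exact hch _ (Finset.mem_image_of_mem g hx) _ (Finset.mem_image_of_mem g hy)
  · rintro ⟨c, ⟨hcW, hc0, hch⟩, rfl⟩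
    refine ⟨Finset.image_subset_image hcW, by simpa using hc0, ?_⟩
    simp only [Finset.mem_image, forall_exists_index, and_imp, forall_apply_eq_imp_iff₂]
    intro x hx y hy
    rw [hg x (hcW hx) y (hcW hy), hg y (hcW hy) x (hcW hx)]
    exact hch x hx y hy

theorem erase_mem_insert_empty_chainComplex {A c : Finset (Finset α)} (hc : c ∈ chainComplex A)
    {m : Finset α} (hmin : ∀ z ∈ c, m ⊆ z) :
    c.erase m ∈ insert ∅ (chainComplex (A.filter (m ⊂ ·))) := by
  obtain ⟨hcA, -, hch⟩ := mem_chainComplex.mp hc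
  refine mem_insert_empty_chainComplex.mpr ⟨fun z hz => ?_, fun x hx y hy =>
    hch x (Finset.mem_of_mem_erase hx) y (Finset.mem_of_mem_erase hy)⟩
  obtain ⟨hzm, hzc⟩ := Finset.mem_erase.mp hz
  exact Finset.mem_filter.mpr ⟨hcA hzc, Finset.ssubset_iff_subset_ne.mpr ⟨hmin z hzc, hzm.symm⟩⟩

theorem linkOf_chainComplex_eq_join {A c : Finset (Finset α)} (hA : IsComplex A)
    (hc : c ∈ chainComplex A) {m : Finset α} (hm : m ∈ c) (hmin : ∀ z ∈ c, m ⊆ z) :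
    linkOf (chainComplex A) c = join (chainComplex (simplexBoundary m))
      (linkOf (chainComplex (A.filter (m ⊂ ·))) (c.erase m)) := by
  obtain ⟨hcA, -, hch⟩ := mem_chainComplex.mp hc
  obtain ⟨hc', hch'⟩ :=
    mem_insert_empty_chainComplex.mp (erase_mem_insert_empty_chainComplex hc hmin)
  rw [linkOf_chainComplex hcA hch, linkOf_chainComplex hc' hch',
    ← chainComplex_union fun u hu v hv => ((mem_simplexBoundary.mp hu).2.trans
      (Finset.mem_filter.mp (Finset.mem_filter.mp hv).1).2).subset]
  congr 1
  ext y
  simp only [Finset.mem_filter, Finset.mem_union, mem_simplexBoundary, Finset.mem_erase]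
  constructor
  · rintro ⟨hyA, hyc, hcomp⟩
    have hym : y ≠ m := fun h => hyc (h ▸ hm)
    refine (hcomp m hm).imp (fun hym' => ⟨hA.ne_empty hyA, Finset.ssubset_iff_subset_ne.mpr
      ⟨hym', hym⟩⟩) fun hmy => ⟨⟨hyA, Finset.ssubset_iff_subset_ne.mpr ⟨hmy, hym.symm⟩⟩,
      fun h => hyc h.2, fun z hz => hcomp z hz.2⟩
  · rintro (⟨hy0, hym⟩ | ⟨⟨hyA, hmy⟩, hyc, hcomp⟩)
    · exact ⟨hA.mem_of_subset (hcA hm) hym.subset hy0, fun hyc => hym.not_subset (hmin y hyc),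
        fun z hz => .inl (hym.subset.trans (hmin z hz))⟩
    · refine ⟨hyA, fun h => hyc ⟨hmy.ne', h⟩, fun z hz => ?_⟩
      rcases eq_or_ne z m with rfl | hzm
      · exact .inr hmy.subset
      · exact hcomp z ⟨hzm, hz⟩

theorem symmDiff_eq_union_of_disjoint {m a : Finset α} (ha : Disjoint a m) :
    symmDiff m a = m ∪ a :=
  ha.symm.symmDiff_eq_sup

theorem IsComplex.filter_ssubset_eq_image_linkOf {A : Finset (Finset α)} (hA : IsComplex A)
    (m : Finset α) : A.filter (m ⊂ ·) = (linkOf A m).image (symmDiff m) := by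
  ext y
  simp only [Finset.mem_filter, Finset.mem_image, mem_linkOf]
  constructor
  · rintro ⟨hyA, hmy⟩
    have hym : y \ m ∪ m = y := Finset.sdiff_union_of_subset hmy.subset
    refine ⟨y \ m, ⟨hA.mem_of_subset hyA Finset.sdiff_subset ?_, Finset.sdiff_disjoint,
      by rwa [hym]⟩, by
        rw [symmDiff_eq_union_of_disjoint Finset.sdiff_disjoint, Finset.union_comm, hym]⟩
    exact Finset.nonempty_iff_ne_empty.mp (Finset.sdiff_nonempty.mpr hmy.not_subset)
  · rintro ⟨s, ⟨hsA, hsm, hsmA⟩, rfl⟩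
    rw [symmDiff_eq_union_of_disjoint hsm, Finset.union_comm]
    refine ⟨hsmA, Finset.ssubset_iff_subset_ne.mpr ⟨Finset.subset_union_right, fun h => ?_⟩⟩
    obtain ⟨v, hv⟩ := Finset.nonempty_iff_ne_empty.mpr (hA.ne_empty hsA)
    exact Finset.disjoint_left.mp hsm hv (h ▸ Finset.mem_union_left m hv)

theorem symmDiff_subset_symmDiff_iff {m a b : Finset α} (ha : Disjoint a m) (hb : Disjoint b m) :
    symmDiff m a ⊆ symmDiff m b ↔ a ⊆ b := by
  rw [symmDiff_eq_union_of_disjoint ha, symmDiff_eq_union_of_disjoint hb]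
  refine ⟨fun h v hv => ?_, Finset.union_subset_union le_rfl⟩
  exact (Finset.mem_union.mp (h (Finset.mem_union_right m hv))).resolve_left
    (Finset.disjoint_left.mp ha hv)

theorem IsComplex.linkOf_ssubset {A : Finset (Finset α)} (hA : IsComplex A) {m : Finset α}
    (hm : m ∈ A) : linkOf A m ⊂ A :=
  Finset.ssubset_iff_subset_ne.mpr ⟨linkOf_subset A m, fun h => hA.ne_empty hm
    (Finset.disjoint_self_iff_empty _ |>.mp (mem_linkOf.mp (h ▸ hm)).2.1)⟩

theorem IsDSManifold.chainComplex_of_ssubset {q : ℤ} {A : Finset (Finset α)}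
    (hA : IsDSManifold q A)
    (ih : ∀ B ⊂ A, ∀ p : ℤ, IsDSSphere p B → IsDSSphere p (chainComplex B)) :
    IsDSManifold q (chainComplex A) := by
  obtain ⟨hAc, hq, hL⟩ := isDSManifold_iff_linkOf.mp hA
  refine isDSManifold_iff_linkOf.mpr ⟨isComplex_chainComplex A,
    (dimC_chainComplex hAc).trans hq, fun c hc => ?_⟩
  obtain ⟨hcA, hc0, hch⟩ := mem_chainComplex.mp hc
  obtain ⟨m, hm, hmin⟩ := exists_subset_forall_of_chain (Finset.nonempty_iff_ne_empty.mpr hc0) hch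
  have hmA := hcA hm
  have hlow := ih _ (hAc.simplexBoundary_ssubset hmA) _
    (isDSSphere_simplexBoundary (hAc.ne_empty hmA))
  -- `m ∆ ·` agrees with `m ∪ ·` on the link of `m` and, unlike it, is injective.
  have hup : IsDSSphere (q - m.card) (chainComplex (A.filter (m ⊂ ·))) := by
    rw [hAc.filter_ssubset_eq_image_linkOf m, chainComplex_image fun a ha b hb =>
      symmDiff_subset_symmDiff_iff (mem_linkOf.mp ha).2.1 (mem_linkOf.mp hb).2.1]
    exact isDSSphere_image (symmDiff_right_injective m)
      (ih _ (hAc.linkOf_ssubset hmA) _ (hL m hmA))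
  have hd : Disjoint (vertexSet (chainComplex (simplexBoundary m)))
      (vertexSet (linkOf (chainComplex (A.filter (m ⊂ ·))) (c.erase m))) := by
    refine Disjoint.mono_right (vertexSet_mono (linkOf_subset _ _)) ?_
    rw [vertexSet_chainComplex, vertexSet_chainComplex, Finset.disjoint_left]
    exact fun y hy hy' => (mem_simplexBoundary.mp hy).2.asymm (Finset.mem_filter.mp hy').2
  rw [linkOf_chainComplex_eq_join hAc hc hm hmin]
  convert isDSSphere_join hlow (isDSSphere_linkOf hup
    (erase_mem_insert_empty_chainComplex hc hmin)) hd using 1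
  rw [Finset.card_erase_of_mem hm, Nat.cast_sub (Finset.card_pos.mpr ⟨m, hm⟩)]
  ring

theorem isDSSphere_chainComplex {p : ℤ} {A : Finset (Finset α)} (h : IsDSSphere p A) :
    IsDSSphere p (chainComplex A) := by
  induction A using Finset.strongInduction generalizing p with
  | H A ih =>
  rw [isDSSphere_iff] at h ⊢
  exact ⟨h.1.chainComplex_of_ssubset fun B hB _ => ih B hB,
    chi_chainComplex h.1.1 ▸ h.2⟩

end BarycentricRefinement

/-- the Barycentric refinement (the complex of nonempty chains of
simplices of G) of a Dehn-Sommerville q-manifold is a Dehn-Sommerville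
q-manifold. -/
theorem barycentric_isDSManifold {α : Type*} [DecidableEq α]
    (q : ℤ) (G : Finset (Finset α)) (hG : IsDSManifold q G) :
    IsDSManifold q (chainComplex G) :=
  hG.chainComplex_of_ssubset fun _ _ _ => isDSSphere_chainComplex
end

section
/- Let G be a Dehn-Sommerville q-manifold and let m ≥ 1 be an integer. Then the m-th characteristic of G equals its Euler characteristic: w_m(G) = χ(G). -/
open Finset

/-- The m-th characteristic w_m(A) = Σ_{(x_1,…,x_m) ∈ A^m, x_1 ∩ ⋯ ∩ x_m ∈ A}
Π_j (−1)^{|x_j|−1} (defined as 0 for m = 0). -/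
def wChar {α : Type*} [DecidableEq α] (m : ℕ) (A : Finset (Finset α)) : ℤ :=
  match m with
  | 0 => 0
  | n + 1 =>
    ∑ x ∈ Fintype.piFinset fun _ : Fin (n + 1) => A,
      if Finset.univ.inf' Finset.univ_nonempty x ∈ A then
        ∏ j, (-1 : ℤ) ^ ((x j).card - 1)
      else 0

/-! The m-th characteristic expands, by inclusion-exclusion over the simplices contained in
x₁ ∩ ⋯ ∩ xₘ, as w_m(G) = Σ_{t∈G} ω(t) χ(U(t))^m with ω(t) = (-1)^{|t|-1}. In a
Dehn-Sommerville q-manifold every star has χ(U(t)) = χ(B(t)) - χ(S(t)) = 1 - (1 + (-1)^{q-1})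
= (-1)^q, the ball being a cone. Hence w_m(G) = (-1)^{qm} χ(G), and the case m = 1 gives
χ(G) = (-1)^q χ(G), so either (-1)^q = 1 or χ(G) = 0. -/

section

variable {α : Type*}

lemma neg_one_pow_card_sub_one {z : Finset α} (hz : z ≠ ∅) :
    (-1 : ℤ) ^ (z.card - 1) = -(-1) ^ z.card := by
  obtain ⟨k, hk⟩ :=
    Nat.exists_eq_add_one_of_ne_zero (card_ne_zero.2 (nonempty_iff_ne_empty.2 hz))
  simp [hk, pow_succ]

lemma chi_eq_neg_sum_neg_one_pow_card {A : Finset (Finset α)} (hA : ∅ ∉ A) :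
    chi A = -∑ z ∈ A, (-1 : ℤ) ^ z.card := by
  rw [chi, ← sum_neg_distrib]
  exact sum_congr rfl fun z hz => neg_one_pow_card_sub_one (ne_of_mem_of_not_mem hz hA)

section DecidableEq

variable [DecidableEq α]

lemma chi_powerset_erase_empty {z : Finset α} (hz : z ≠ ∅) :
    chi (z.powerset.erase ∅) = 1 := by
  rw [chi_eq_neg_sum_neg_one_pow_card (notMem_erase _ _),
    sum_erase_eq_sub (empty_mem_powerset z),
    sum_powerset_neg_one_pow_card_of_nonempty (nonempty_iff_ne_empty.2 hz)]
  simp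

lemma sum_neg_one_pow_card_eq_zero_of_cone {𝒜 : Finset (Finset α)} (v : α)
    (h_insert : ∀ z ∈ 𝒜, insert v z ∈ 𝒜)
    (h_erase : ∀ z ∈ 𝒜, z.erase v ∈ 𝒜) :
    ∑ z ∈ 𝒜, (-1 : ℤ) ^ z.card = 0 := by
  refine sum_involution (fun z _ => if v ∈ z then z.erase v else insert v z)
    ?_ ?_ ?_ ?_
  · intro z _
    split_ifs with hv
    · have h_card := card_erase_add_one hv
      rw [← h_card, pow_succ]; ring
    · rw [card_insert_of_notMem hv, pow_succ]; ring
  · intro z _ _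
    split_ifs with hv
    · exact (ne_of_mem_of_not_mem' hv (notMem_erase v z)).symm
    · exact insert_ne_self.2 hv
  · intro z hz
    split_ifs
    exacts [h_erase z hz, h_insert z hz]
  · intro z _
    by_cases hv : v ∈ z <;> simp [hv]

lemma chi_filter_subset {G : Finset (Finset α)} (hC : IsComplex G) {y z : Finset α}
    (hy : y ∈ G) (hzy : z ⊆ y) : chi (G.filter (· ⊆ z)) = if z ∈ G then 1 else 0 := by
  by_cases hz : z = ∅
  · subst hz
    have h_empty : G.filter (· ⊆ ∅) = ∅ :=
      filter_eq_empty_iff.2 fun x hx => by simpa [subset_empty] using (hC x hx).1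
    rw [h_empty, if_neg fun h => (hC ∅ h).1 rfl]
    rfl
  · have h_faces : G.filter (· ⊆ z) = z.powerset.erase ∅ := by
      ext x
      simp only [mem_filter, mem_erase, mem_powerset]
      exact ⟨fun ⟨hx, hxz⟩ => ⟨(hC x hx).1, hxz⟩,
        fun ⟨hx, hxz⟩ => ⟨(hC y hy).2 x (hxz.trans hzy) hx, hxz⟩⟩
    rw [h_faces, chi_powerset_erase_empty hz, if_pos ((hC y hy).2 z hzy hz)]

lemma starOf_subset_ballOf (G : Finset (Finset α)) (t : Finset α) :
    starOf G t ⊆ ballOf G t := fun y hy =>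
  mem_filter.2 ⟨(mem_filter.1 hy).1, y, (mem_filter.1 hy).1, (mem_filter.1 hy).2, subset_rfl⟩

lemma chi_ballOf {G : Finset (Finset α)} (hC : IsComplex G) {t : Finset α} (ht : t ∈ G) :
    chi (ballOf G t) = 1 := by
  obtain ⟨v, hv⟩ := nonempty_iff_ne_empty.2 (hC t ht).1
  have h_mem : ∀ z, z ∈ insert ∅ (ballOf G t) ↔ ∃ y ∈ G, t ⊆ y ∧ z ⊆ y := by
    intro z
    simp only [ballOf, mem_insert, mem_filter]
    refine ⟨?_, fun ⟨y, hy, hty, hzy⟩ => ?_⟩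
    · rintro (rfl | ⟨-, h⟩)
      exacts [⟨t, ht, subset_rfl, empty_subset t⟩, h]
    · by_cases hz : z = ∅
      exacts [Or.inl hz, Or.inr ⟨(hC y hy).2 z hzy hz, y, hy, hty, hzy⟩]
  -- adjoining ∅ turns the ball into a cone with apex v, in which ∅ is paired with {v}
  have h_cone := sum_neg_one_pow_card_eq_zero_of_cone (𝒜 := insert ∅ (ballOf G t)) v
    (fun z hz => by
      obtain ⟨y, hy, hty, hzy⟩ := (h_mem z).1 hz
      exact (h_mem _).2 ⟨y, hy, hty, insert_subset (hty hv) hzy⟩)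
    (fun z hz => by
      obtain ⟨y, hy, hty, hzy⟩ := (h_mem z).1 hz
      exact (h_mem _).2 ⟨y, hy, hty, (erase_subset v z).trans hzy⟩)
  have h_empty : ∅ ∉ ballOf G t := fun h => (hC ∅ (mem_filter.1 h).1).1 rfl
  rw [sum_insert h_empty] at h_cone
  rw [chi_eq_neg_sum_neg_one_pow_card h_empty]
  simp only [card_empty, pow_zero] at h_cone
  linarith

lemma IsDSSphere.chi_eq {r : ℕ} {S : Finset (Finset α)} (h : IsDSSphere ((r : ℤ) - 1) S) :
    chi S = 1 - (-1) ^ r := by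
  generalize hs : (r : ℤ) - 1 = s at h
  cases h with
  | empty =>
    obtain rfl : r = 0 := by omega
    simp [chi]
  | step q _ _ _ _ hχ =>
    obtain rfl : r = q + 1 := by omega
    rw [hχ, pow_succ]
    ring

lemma IsDSManifold.chi_starOf {q : ℤ} {G : Finset (Finset α)} (hG : IsDSManifold q G)
    {t : Finset α} (ht : t ∈ G) : chi (starOf G t) = (-1) ^ q.toNat := by
  obtain ⟨hC, hdim, hS⟩ := hG
  have hq : q = (q.toNat : ℤ) := by
    have h_card := card_pos.2 (nonempty_iff_ne_empty.2 (hC t ht).1)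
    have h_sup := le_sup (f := card) ht
    rw [← hdim, dimC]
    omega
  have h_split : chi (sphereOf G t) + chi (starOf G t) = chi (ballOf G t) :=
    sum_sdiff (starOf_subset_ballOf G t)
  have h_sphere := hS t ht
  rw [hq] at h_sphere
  rw [h_sphere.chi_eq, chi_ballOf hC ht] at h_split
  linarith

lemma wChar_one (A : Finset (Finset α)) : wChar 1 A = chi A := by
  calc wChar 1 A
      = ∑ x ∈ Fintype.piFinset fun _ : Fin 1 => A, ∏ j, (-1 : ℤ) ^ ((x j).card - 1) :=
        sum_congr rfl fun x hx => if_pos (by simpa using Fintype.mem_piFinset.1 hx 0)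
    _ = chi A := by
      rw [sum_prod_piFinset A fun _ y => (-1 : ℤ) ^ (y.card - 1), Fin.prod_univ_one, chi]

lemma wChar_succ_eq_sum_chi_starOf_pow {G : Finset (Finset α)} (hC : IsComplex G) (n : ℕ) :
    wChar (n + 1) G = ∑ t ∈ G, (-1 : ℤ) ^ (t.card - 1) * chi (starOf G t) ^ (n + 1) := by
  have h_expand : ∀ x ∈ Fintype.piFinset fun _ : Fin (n + 1) => G,
      (if univ.inf' univ_nonempty x ∈ G then ∏ j, (-1 : ℤ) ^ ((x j).card - 1) else 0) =
        ∑ t ∈ G, (-1 : ℤ) ^ (t.card - 1) *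
          ∏ j, if t ⊆ x j then (-1 : ℤ) ^ ((x j).card - 1) else 0 := by
    intro x hx
    have h_ind := chi_filter_subset hC (Fintype.mem_piFinset.1 hx 0) (inf'_le x (mem_univ 0))
    simp only [prod_ite_zero, ← le_inf'_iff univ_nonempty, mul_ite, mul_zero]
    rw [← sum_filter, ← sum_mul, ← chi, h_ind, ite_zero_mul, one_mul]
  calc wChar (n + 1) G = ∑ x ∈ Fintype.piFinset fun _ : Fin (n + 1) => G, ∑ t ∈ G,
        (-1 : ℤ) ^ (t.card - 1) * ∏ j, if t ⊆ x j then (-1 : ℤ) ^ ((x j).card - 1) else 0 :=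
        sum_congr rfl h_expand
    _ = _ := by
      rw [sum_comm]
      refine sum_congr rfl fun t _ => ?_
      rw [← mul_sum,
        sum_prod_piFinset G fun _ y => if t ⊆ y then (-1 : ℤ) ^ (y.card - 1) else 0,
        prod_const, card_univ, Fintype.card_fin, starOf, chi, sum_filter]

lemma wChar_succ_eq_pow_mul_chi {G : Finset (Finset α)} (hC : IsComplex G) {ε : ℤ}
    (hε : ∀ t ∈ G, chi (starOf G t) = ε) (n : ℕ) :
    wChar (n + 1) G = ε ^ (n + 1) * chi G := by
  rw [wChar_succ_eq_sum_chi_starOf_pow hC, sum_congr rfl fun t ht => by rw [hε t ht],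
    ← sum_mul, mul_comm, chi]

end DecidableEq

end

/-- for a Dehn-Sommerville q-manifold, all higher characteristics
agree with the Euler characteristic: w_m(G) = χ(G) for all m ≥ 1. -/
theorem wChar_eq_chi_of_DSManifold {α : Type*} [DecidableEq α]
    (q : ℤ) (G : Finset (Finset α)) (hG : IsDSManifold q G)
    (m : ℕ) (hm : 1 ≤ m) :
    wChar m G = chi G := by
  obtain ⟨n, rfl⟩ : ∃ n, m = n + 1 := ⟨m - 1, by omega⟩
  have hw := wChar_succ_eq_pow_mul_chi hG.1 fun t ht => hG.chi_starOf ht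
  have h_flip : (-1 : ℤ) ^ q.toNat * chi G = chi G := by
    simpa [wChar_one] using (hw 0).symm
  rcases mul_left_eq_self₀.1 h_flip with hε | hχ
  · rw [hw, hε, one_pow, one_mul]
  · rw [hw, hχ, mul_zero]
end
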